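/- arXiv:2101.05847 — 3 statements merged into one kernel-verified Lean document; each statement's English description precedes it below -/
import Mathlib

section
/- Let γ : [a,b] → ℝ be C¹ with γ'(x) ≥ c̄ > 0. For a C¹ perturbation direction τ : [a,b] → ℝ, the pathwise derivative of the inverse map at γ along τ satisfies: lim_{t→0⁺} [(γ + tτ)⁻¹(v) − γ⁻¹(v)]/t = − τ(γ⁻¹(v)) / γ'(γ⁻¹(v)) for v in the interior of the range of γ. -/
open Set Filter

private lemma mvt_aux (γ γ' : ℝ → ℝ) (hγ : ∀ x, HasDerivAt γ (γ' x) x) (u w : ℝ) :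
    ∃ ξ ∈ Icc (min u w) (max u w), γ w - γ u = γ' ξ * (w - u) := by
  rcases lt_trichotomy u w with h | h | h
  · obtain ⟨c, hc, hc'⟩ := exists_hasDerivAt_eq_slope γ γ' h
      (fun x _ => (hγ x).continuousAt.continuousWithinAt) (fun x _ => hγ x)
    refine ⟨c, ⟨le_trans (min_le_left _ _) hc.1.le, le_trans hc.2.le (le_max_right _ _)⟩, ?_⟩
    rw [hc', div_mul_cancel₀ _ (sub_ne_zero.mpr h.ne')]
  · exact ⟨u, ⟨min_le_left _ _, le_max_left _ _⟩, by rw [h]; ring⟩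
  · obtain ⟨c, hc, hc'⟩ := exists_hasDerivAt_eq_slope γ γ' h
      (fun x _ => (hγ x).continuousAt.continuousWithinAt) (fun x _ => hγ x)
    refine ⟨c, ⟨le_trans (min_le_right _ _) hc.1.le, le_trans hc.2.le (le_max_left _ _)⟩, ?_⟩
    rw [hc']
    have hne : (u : ℝ) - w ≠ 0 := sub_ne_zero.mpr h.ne'
    field_simp
    ring

theorem stmt_7 (a b cbar t₀ v : ℝ) (γ γ' τ τ' : ℝ → ℝ) (inv : ℝ → ℝ → ℝ)
    (hcbar : 0 < cbar) (ht₀ : 0 < t₀)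
    -- γ is C¹ with derivative bounded below by cbar on [a,b]
    (hγ : ∀ x, HasDerivAt γ (γ' x) x) (hγ'c : Continuous γ')
    (hγ'lb : ∀ x ∈ Icc a b, cbar ≤ γ' x)
    -- τ is a bounded C¹ direction
    (hτ : ∀ x, HasDerivAt τ (τ' x) x) (hτ'c : Continuous τ')
    (hτbdd : ∃ C, ∀ x, |τ x| ≤ C)
    -- v lies in the interior of the range of γ
    (hv : v ∈ Ioo (γ a) (γ b))
    -- inv t is the inverse of γ + t•τ at v, for t ∈ [0, t₀)
    (hinv_mem : ∀ t ∈ Ico (0:ℝ) t₀, inv t v ∈ Icc a b)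
    (hinv : ∀ t ∈ Ico (0:ℝ) t₀, γ (inv t v) + t * τ (inv t v) = v) :
    Tendsto (fun t => (inv t v - inv 0 v) / t) (nhdsWithin 0 (Ioi 0))
      (nhds (-(τ (inv 0 v) / γ' (inv 0 v)))) := by
  obtain ⟨C, hC⟩ := hτbdd
  set x0 := inv 0 v with hx0def
  have h0mem : (0:ℝ) ∈ Ico (0:ℝ) t₀ := ⟨le_refl _, ht₀⟩
  have hx0 : x0 ∈ Icc a b := hinv_mem 0 h0mem
  have hγx0 : γ x0 = v := by have := hinv 0 h0mem; simpa using this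
  -- MVT with membership info, for t ∈ Ico 0 t₀
  have hP : ∀ t ∈ Ico (0:ℝ) t₀, ∃ ξ, ξ ∈ Icc a b ∧ |ξ - x0| ≤ |inv t v - x0| ∧
      γ (inv t v) - γ x0 = γ' ξ * (inv t v - x0) := by
    intro t ht
    obtain ⟨ξ, hξmem, hξeq⟩ := mvt_aux γ γ' hγ x0 (inv t v)
    have hy := hinv_mem t ht
    refine ⟨ξ, ?_, ?_, hξeq⟩
    · constructor
      · calc a ≤ min x0 (inv t v) := le_min hx0.1 hy.1
          _ ≤ ξ := hξmem.1
      · calc ξ ≤ max x0 (inv t v) := hξmem.2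
          _ ≤ b := max_le hx0.2 hy.2
    · have h2 := hξmem.1
      have h1 := hξmem.2
      rcases le_total x0 (inv t v) with h | h
      · rw [min_eq_left h] at h2; rw [max_eq_right h] at h1
        rw [abs_of_nonneg (sub_nonneg.mpr h), abs_sub_le_iff]
        constructor <;> linarith
      · rw [min_eq_right h] at h2; rw [max_eq_left h] at h1
        rw [abs_of_nonpos (sub_nonpos.mpr h), abs_sub_le_iff]
        constructor <;> linarith
  classical
  set ξ : ℝ → ℝ := fun t => if h : t ∈ Ico (0:ℝ) t₀ then (hP t h).choose else x0 with hξdef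
  have hξspec : ∀ t (h : t ∈ Ico (0:ℝ) t₀), (ξ t) ∈ Icc a b ∧ |ξ t - x0| ≤ |inv t v - x0| ∧
      γ (inv t v) - γ x0 = γ' (ξ t) * (inv t v - x0) := by
    intro t h
    simp only [hξdef, dif_pos h]
    exact (hP t h).choose_spec
  -- key bound: |inv t v - x0| ≤ C * t / cbar for t ∈ Ico 0 t₀
  have hbound : ∀ t ∈ Ico (0:ℝ) t₀, |inv t v - x0| ≤ C * t / cbar := by
    intro t ht
    obtain ⟨hξab, hξclose, hξeq⟩ := hξspec t ht
    have hγ'pos : cbar ≤ γ' (ξ t) := hγ'lb _ hξab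
    have heq : γ (inv t v) - γ x0 = -(t * τ (inv t v)) := by
      have := hinv t ht; rw [hγx0]; linarith
    have : γ' (ξ t) * |inv t v - x0| = |t * τ (inv t v)| := by
      rw [← abs_neg (t * τ (inv t v)), ← heq, hξeq, abs_mul,
        abs_of_pos (lt_of_lt_of_le hcbar hγ'pos)]
    have h2 : cbar * |inv t v - x0| ≤ |t| * |τ (inv t v)| := by
      rw [← abs_mul, ← this]
      exact mul_le_mul_of_nonneg_right hγ'pos (abs_nonneg _)
    have h3 : |t| * |τ (inv t v)| ≤ C * t := by
      rw [abs_of_nonneg ht.1, mul_comm]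
      exact mul_le_mul_of_nonneg_right (hC _) ht.1
    rw [le_div_iff₀ hcbar, mul_comm _ cbar]
    linarith
  have hzero : Tendsto (fun t : ℝ => C * t / cbar) (nhdsWithin 0 (Ioi 0)) (nhds 0) := by
    have : Tendsto (fun t : ℝ => C * t / cbar) (nhds 0) (nhds (C * 0 / cbar)) := by
      exact (tendsto_id.const_mul C).div_const cbar
    simpa using this.mono_left nhdsWithin_le_nhds
  have hIoo : Ioo (0:ℝ) t₀ ∈ nhdsWithin (0:ℝ) (Ioi 0) := Ioo_mem_nhdsGT_of_mem ⟨le_refl _, ht₀⟩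
  have hinvtend : Tendsto (fun t => inv t v) (nhdsWithin 0 (Ioi 0)) (nhds x0) := by
    rw [← tendsto_sub_nhds_zero_iff]
    apply squeeze_zero_norm' _ hzero
    filter_upwards [hIoo] with t ht
    simpa [Real.norm_eq_abs] using hbound t ⟨ht.1.le, ht.2⟩
  have hξtend : Tendsto ξ (nhdsWithin 0 (Ioi 0)) (nhds x0) := by
    rw [← tendsto_sub_nhds_zero_iff]
    apply squeeze_zero_norm' _ hzero
    filter_upwards [hIoo] with t ht
    simpa [Real.norm_eq_abs] using
      le_trans (hξspec t ⟨ht.1.le, ht.2⟩).2.1 (hbound t ⟨ht.1.le, ht.2⟩)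
  have hγ'x0 : (0:ℝ) < γ' x0 := lt_of_lt_of_le hcbar (hγ'lb _ hx0)
  have hτcont : Continuous τ := by
    rw [continuous_iff_continuousAt]; exact fun x => (hτ x).continuousAt
  have hmain : Tendsto (fun t => -(τ (inv t v)) / γ' (ξ t)) (nhdsWithin 0 (Ioi 0))
      (nhds (-(τ x0 / γ' x0))) := by
    have h1 : Tendsto (fun t => -(τ (inv t v))) (nhdsWithin 0 (Ioi 0)) (nhds (-(τ x0))) :=
      ((hτcont.tendsto x0).comp hinvtend).neg
    have h2 : Tendsto (fun t => γ' (ξ t)) (nhdsWithin 0 (Ioi 0)) (nhds (γ' x0)) :=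
      (hγ'c.tendsto x0).comp hξtend
    have h3 : Tendsto (fun t => -(τ (inv t v)) / γ' (ξ t)) (nhdsWithin 0 (Ioi 0))
        (nhds (-(τ x0) / γ' x0)) := h1.div h2 hγ'x0.ne'
    simpa only [neg_div] using h3
  apply hmain.congr'
  filter_upwards [hIoo] with t ht
  have htI : t ∈ Ico (0:ℝ) t₀ := ⟨ht.1.le, ht.2⟩
  obtain ⟨hξab, hξclose, hξeq⟩ := hξspec t htI
  have heq : γ (inv t v) - γ x0 = -(t * τ (inv t v)) := by
    have := hinv t htI; rw [hγx0]; linarith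
  have hγ'ξ : (0:ℝ) < γ' (ξ t) := lt_of_lt_of_le hcbar (hγ'lb _ hξab)
  have ht0 : t ≠ 0 := ht.1.ne'
  rw [hξeq] at heq
  field_simp
  linarith [heq]
end

section
/- Let γ_k, γ_j : [a,b] → ℝ be C¹ with γ_k' ≥ c̄ > 0, and let τ = (τ_j, τ_k) be C¹ directions. Then the joint pathwise derivative satisfies: lim_{t→0⁺} [(γ_k + tτ_k)⁻¹(γ_j(x) + tτ_j(x)) − γ_k⁻¹(γ_j(x))]/t = [τ_j(x) − τ_k(γ_k⁻¹(γ_j(x)))] / γ_k'(γ_k⁻¹(γ_j(x))). -/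
/-!
Write `y t` for the perturbed inverse and `y₀ = y 0`. Subtracting the defining equations gives
`γk (y t) - γk y₀ = t * (τj x - τk (y t))`. Since `γk' ≥ cbar` on `[a, b]`, `γk` expands distances
by at least `cbar` there, so `|y t - y₀| = O(t)` and `y t → y₀`. Dividing the identity by `t` and
replacing the difference quotient of `γk` at `y₀` by its limit `γk' y₀ ≠ 0` gives the derivative.
-/

open Set Filter Topology

theorem Convex.mul_abs_sub_le_abs_image_sub {D : Set ℝ} (hD : Convex ℝ D) {f f' : ℝ → ℝ}
    (hf : ∀ x ∈ D, HasDerivAt f (f' x) x) {C : ℝ} (hC : ∀ x ∈ D, C ≤ f' x)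
    {x y : ℝ} (hx : x ∈ D) (hy : y ∈ D) : C * |y - x| ≤ |f y - f x| := by
  have grow := hD.mul_sub_le_image_sub_of_le_deriv
    (fun z hz => (hf z hz).continuousAt.continuousWithinAt)
    (fun z hz => (hf z (interior_subset hz)).differentiableAt.differentiableWithinAt)
    (C := C) (fun z hz => (hf z (interior_subset hz)).deriv ▸ hC z (interior_subset hz))
  rcases le_total x y with hxy | hyx
  · rw [abs_of_nonneg (sub_nonneg.2 hxy)]
    exact (grow x hx y hy hxy).trans (le_abs_self _)
  · rw [abs_sub_comm, abs_sub_comm (f y), abs_of_nonneg (sub_nonneg.2 hyx)]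
    exact (grow y hy x hx hyx).trans (le_abs_self _)

theorem tendsto_sub_div_of_hasDerivAt {f : ℝ → ℝ} {f' y₀ L : ℝ} {y g : ℝ → ℝ} {l : Filter ℝ}
    (hf : HasDerivAt f f' y₀) (hf' : f' ≠ 0) (hy : Tendsto y l (𝓝 y₀))
    (hg : Tendsto g l (𝓝 L)) (hl : ∀ᶠ t in l, t ≠ 0)
    (heq : ∀ᶠ t in l, f (y t) - f y₀ = t * g t) :
    Tendsto (fun t => (y t - y₀) / t) l (𝓝 (L / f')) := by
  -- `dslope` rather than `slope`: it is continuous at `y₀`, and no division by `y t - y₀` (possibly 0)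
  have hD : Tendsto (fun t => dslope f y₀ (y t)) l (𝓝 f') := by
    have := (continuousAt_dslope_same.2 hf.differentiableAt).tendsto.comp hy
    rwa [dslope_same, hf.deriv] at this
  refine (hg.div hD hf').congr' ?_
  filter_upwards [hl, heq, hD.eventually_ne hf'] with t ht hft hDt
  have hfactor := sub_smul_dslope f y₀ (y t)
  rw [smul_eq_mul, hft] at hfactor
  rw [Pi.div_apply, div_eq_div_iff hDt ht]
  linarith

theorem stmt_9_general (a b cbar t₀ x : ℝ) (γk γk' γj τj τk τk' : ℝ → ℝ)
    (invk : ℝ → ℝ → ℝ)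
    (hcbar : 0 < cbar) (ht₀ : 0 < t₀)
    -- γk is C¹ with derivative bounded below by cbar on [a,b]
    (hγk : ∀ y, HasDerivAt γk (γk' y) y)
    (hγk'lb : ∀ y ∈ Icc a b, cbar ≤ γk' y)
    -- γj, τj, τk are C¹, τj and τk bounded
    (hτk : ∀ y, HasDerivAt τk (τk' y) y)
    (hτkbdd : ∃ C, ∀ y, |τk y| ≤ C)
    -- invk t is the inverse of γk + t•τk, evaluated at γj x + t·τj x
    (hinv_mem : ∀ t ∈ Ico (0:ℝ) t₀, invk t (γj x + t * τj x) ∈ Icc a b)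
    (hinv : ∀ t ∈ Ico (0:ℝ) t₀,
      γk (invk t (γj x + t * τj x)) + t * τk (invk t (γj x + t * τj x))
        = γj x + t * τj x)
    -- at t = 0, invk 0 is the inverse of γk at γj x
    (hinv0_mem : invk 0 (γj x) ∈ Icc a b)
    (hinv0 : γk (invk 0 (γj x)) = γj x) :
    Tendsto (fun t => (invk t (γj x + t * τj x) - invk 0 (γj x)) / t)
      (nhdsWithin 0 (Ioi 0))
      (nhds ((τj x - τk (invk 0 (γj x))) / γk' (invk 0 (γj x)))) := by
  obtain ⟨C, hC⟩ := hτkbdd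
  set y₀ := invk 0 (γj x)
  set y : ℝ → ℝ := fun t => invk t (γj x + t * τj x)
  have hshift : ∀ t ∈ Ico 0 t₀, γk (y t) - γk y₀ = t * (τj x - τk (y t)) := fun t ht => by
    linear_combination hinv t ht - hinv0
  have hlip : ∀ t ∈ Ico 0 t₀, |y t - y₀| ≤ t * (|τj x| + C) / cbar := fun t ht => by
    rw [le_div_iff₀' hcbar]
    calc cbar * |y t - y₀| ≤ |γk (y t) - γk y₀| :=
          (convex_Icc a b).mul_abs_sub_le_abs_image_sub (fun z _ => hγk z) hγk'lb
            hinv0_mem (hinv_mem t ht)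
      _ = t * |τj x - τk (y t)| := by rw [hshift t ht, abs_mul, abs_of_nonneg ht.1]
      _ ≤ t * (|τj x| + C) :=
          mul_le_mul_of_nonneg_left ((abs_sub _ _).trans (add_le_add_right (hC _) _)) ht.1
  have hnear : Ico 0 t₀ ∈ 𝓝[>] (0 : ℝ) := Ico_mem_nhdsGT ht₀
  have hy : Tendsto y (𝓝[>] 0) (𝓝 y₀) := by
    have hbound : Tendsto (fun t : ℝ => t * (|τj x| + C) / cbar) (𝓝[>] 0) (𝓝 0) := by
      refine (Continuous.tendsto' ?_ 0 0 (by simp)).mono_left nhdsWithin_le_nhds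
      fun_prop
    exact tendsto_iff_norm_sub_tendsto_zero.2 <|
      squeeze_zero' (.of_forall fun _ => norm_nonneg _) (mem_of_superset hnear hlip) hbound
  have hdir : Tendsto (fun t => τj x - τk (y t)) (𝓝[>] 0) (𝓝 (τj x - τk y₀)) :=
    tendsto_const_nhds.sub ((hτk y₀).continuousAt.tendsto.comp hy)
  exact tendsto_sub_div_of_hasDerivAt (hγk y₀) (hcbar.trans_le (hγk'lb y₀ hinv0_mem)).ne' hy
    hdir (eventually_nhdsWithin_of_forall fun _ ht => ne_of_gt ht) (mem_of_superset hnear hshift)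

theorem stmt_9 (a b cbar t₀ x : ℝ) (γk γk' γj γj' τj τj' τk τk' : ℝ → ℝ)
    (invk : ℝ → ℝ → ℝ)
    (hcbar : 0 < cbar) (ht₀ : 0 < t₀)
    -- γk is C¹ with derivative bounded below by cbar on [a,b]
    (hγk : ∀ y, HasDerivAt γk (γk' y) y) (hγk'c : Continuous γk')
    (hγk'lb : ∀ y ∈ Icc a b, cbar ≤ γk' y)
    -- γj, τj, τk are C¹, τj and τk bounded
    (hγj : ∀ y, HasDerivAt γj (γj' y) y)
    (hτj : ∀ y, HasDerivAt τj (τj' y) y)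
    (hτk : ∀ y, HasDerivAt τk (τk' y) y)
    (hτjbdd : ∃ C, ∀ y, |τj y| ≤ C) (hτkbdd : ∃ C, ∀ y, |τk y| ≤ C)
    (hx : x ∈ Icc a b)
    -- invk t is the inverse of γk + t•τk, evaluated at γj x + t·τj x
    (hinv_mem : ∀ t ∈ Ico (0:ℝ) t₀, invk t (γj x + t * τj x) ∈ Icc a b)
    (hinv : ∀ t ∈ Ico (0:ℝ) t₀,
      γk (invk t (γj x + t * τj x)) + t * τk (invk t (γj x + t * τj x))
        = γj x + t * τj x)
    -- at t = 0, invk 0 is the inverse of γk at γj x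
    (hinv0_mem : invk 0 (γj x) ∈ Icc a b)
    (hinv0 : γk (invk 0 (γj x)) = γj x) :
    Tendsto (fun t => (invk t (γj x + t * τj x) - invk 0 (γj x)) / t)
      (nhdsWithin 0 (Ioi 0))
      (nhds ((τj x - τk (invk 0 (γj x))) / γk' (invk 0 (γj x)))) :=
  stmt_9_general a b cbar t₀ x γk γk' γj τj τk τk' invk hcbar ht₀ hγk hγk'lb hτk hτkbdd hinv_mem
    hinv hinv0_mem hinv0
end

section
/- In the gift game Nash equilibrium g₁*(μ) = [(1+μ)m₁ − m₂]/(2+μ) and g₂*(μ) = [(1+μ)m₂ − m₁]/(2+μ), both g₁* and g₂* are strictly increasing functions of μ on any interval of μ > 0 where both are positive, i.e., dg₁*/dμ = (m₁ + m₂)/(2+μ)² > 0 and dg₂*/dμ = (m₁ + m₂)/(2+μ)² > 0. -/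
lemma hasDerivAt_gift (a b : ℝ) {μ : ℝ} (hμ : 2 + μ ≠ 0) :
    HasDerivAt (fun μ => ((1 + μ) * a - b) / (2 + μ)) ((a + b) / (2 + μ) ^ 2) μ := by
  have hnum : HasDerivAt (fun μ : ℝ => (1 + μ) * a - b) a μ := by
    simpa using (((hasDerivAt_id μ).const_add 1).mul_const a).sub_const b
  have hden : HasDerivAt (fun μ : ℝ => 2 + μ) 1 μ := (hasDerivAt_id μ).const_add 2
  exact (hnum.div hden hμ).congr_deriv (by ring)

lemma gift_deriv_pos {a b : ℝ} (hab : 0 < a + b) {μ : ℝ} (hμ : -2 < μ) :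
    0 < (a + b) / (2 + μ) ^ 2 :=
  div_pos hab (pow_pos (by linarith) 2)

lemma strictMonoOn_gift {a b : ℝ} (hab : 0 < a + b) :
    StrictMonoOn (fun μ => ((1 + μ) * a - b) / (2 + μ)) (Set.Ioi (-2)) := by
  have hne : ∀ μ ∈ Set.Ioi (-2 : ℝ), 2 + μ ≠ 0 := fun μ hμ => by
    rw [Set.mem_Ioi] at hμ; linarith
  refine strictMonoOn_of_hasDerivWithinAt_pos
    (f' := fun μ => (a + b) / (2 + μ) ^ 2) (convex_Ioi _)
    (fun μ hμ => (hasDerivAt_gift a b (hne μ hμ)).continuousAt.continuousWithinAt) ?_ ?_ <;>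
    rw [interior_Ioi]
  · exact fun μ hμ => (hasDerivAt_gift a b (hne μ hμ)).hasDerivWithinAt
  · exact fun μ hμ => gift_deriv_pos hab hμ

theorem stmt_17 (m₁ m₂ : ℝ) (hm₁ : 0 < m₁) (hm₂ : 0 < m₂) :
    let g₁ : ℝ → ℝ := fun μ => ((1 + μ) * m₁ - m₂) / (2 + μ)
    let g₂ : ℝ → ℝ := fun μ => ((1 + μ) * m₂ - m₁) / (2 + μ)
    (∀ μ : ℝ, 0 < μ →
      HasDerivAt g₁ ((m₁ + m₂) / (2 + μ) ^ 2) μ ∧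
      HasDerivAt g₂ ((m₁ + m₂) / (2 + μ) ^ 2) μ ∧
      0 < (m₁ + m₂) / (2 + μ) ^ 2) ∧
    StrictMonoOn g₁ (Set.Ioi 0) ∧ StrictMonoOn g₂ (Set.Ioi 0) := by
  intro g₁ g₂
  have h₁₂ : 0 < m₁ + m₂ := add_pos hm₁ hm₂
  have h₂₁ : 0 < m₂ + m₁ := add_pos hm₂ hm₁
  have hIoi : Set.Ioi (0 : ℝ) ⊆ Set.Ioi (-2) := Set.Ioi_subset_Ioi (by norm_num)
  refine ⟨fun μ hμ => ⟨?_, ?_, gift_deriv_pos h₁₂ (by linarith)⟩,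
    (strictMonoOn_gift h₁₂).mono hIoi, (strictMonoOn_gift h₂₁).mono hIoi⟩
  · exact hasDerivAt_gift m₁ m₂ (by linarith)
  · rw [add_comm m₁ m₂]
    exact hasDerivAt_gift m₂ m₁ (by linarith)
end
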